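/- Let ζ = (ζ₁,ζ₂,ζ₃) ∈ {−1,0,1}³ with ζ ≠ (0,0,0) and λ₁, λ₂, λ₃ > 0, with f, ∇ and the composition tensor T as in the context. If T(X,X) = 0 for all X ∈ m (i.e., f is a G₁f-structure), then either T(X,Y) = 0 for all X, Y ∈ m (f is a Hermitian f-structure) or (∇_{fX} f)(fX) = 0 for all X ∈ m (f is a nearly Kähler f-structure). In other words, the flag manifold SU(3)/T_max admits no invariant strictly G₁f-structures; in particular, it admits no invariant almost Hermitian structures of class G₁ that are neither nearly Kähler nor Hermitian. -/

import Mathlib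

/-!
The Koszul formula determines `U` explicitly in the coordinates `(a, b, c)` of `D(a, b, c)`,
so `α`, `∇f` and `T` become explicit bi-antilinear expressions in these coordinates. The `k`-th
component of `T` carries the factors `ζ₁ζ₂ζ₃ (1 + ζ_{k+1}ζ_{k+2}) (ζ_{k+2} + ζ_k)` and
`ζ₁ζ₂ζ₃ (1 + ζ_{k+1}ζ_{k+2}) (ζ_{k+1} + ζ_k)` (indices mod 3), which vanish for
`ζ ∈ {-1, 0, 1}³` unless `ζ₁ = ζ₂ = ζ₃ ≠ 0`; so `T ≡ 0` unless `f = ±J` is an almost complex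
structure. In that case `T(X, X) = 0` at `X = D(1, 1, 1)` forces `λ₁ = λ₂ = λ₃`, and for this
(normal) metric `(∇_{fX} f)(fX) = 0`.
-/

open ComplexConjugate Matrix

noncomputable section

/-- The matrix D(a,b,c) ∈ su(3): zero diagonal, X₁₂ = a, X₂₁ = −conj a,
X₂₃ = b, X₃₂ = −conj b, X₁₃ = conj c, X₃₁ = −c. -/
def Dm (a b c : ℂ) : Matrix (Fin 3) (Fin 3) ℂ :=
  !![0, a, conj c; -conj a, 0, b; -c, -conj b, 0]

/-- The real Lie algebra su(3) of traceless skew-Hermitian 3×3 complex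
matrices (as a set of matrices, with bracket [X,Y] = XY − YX). -/
def su3 : Set (Matrix (Fin 3) (Fin 3) ℂ) :=
  {X | Xᴴ = -X ∧ X.trace = 0}

/-- h: the diagonal matrices in su(3). -/
def hSet : Set (Matrix (Fin 3) (Fin 3) ℂ) :=
  {X | X ∈ su3 ∧ ∀ i j, i ≠ j → X i j = 0}

/-- m = {D(a,b,c)}. -/
def mSet : Set (Matrix (Fin 3) (Fin 3) ℂ) :=
  {X | ∃ a b c : ℂ, X = Dm a b c}

/-- The three components m₁, m₂, m₃ of m. -/
def mComp : Fin 3 → Set (Matrix (Fin 3) (Fin 3) ℂ) :=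
  ![{X | ∃ a : ℂ, X = Dm a 0 0}, {X | ∃ b : ℂ, X = Dm 0 b 0},
    {X | ∃ c : ℂ, X = Dm 0 0 c}]

/-- ⟨X,Y⟩₀ = −½ Re tr(XY). -/
def inner0 (X Y : Matrix (Fin 3) (Fin 3) ℂ) : ℝ :=
  -(1 / 2) * ((X * Y).trace).re

end

noncomputable section

/-- The m-component of a matrix in su(3) = h ⊕ m (h the diagonal part):
zero out the diagonal. -/
def projm (Z : Matrix (Fin 3) (Fin 3) ℂ) : Matrix (Fin 3) (Fin 3) ℂ :=
  Z - Matrix.diagonal fun i => Z i i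

/-- Projections of m onto its components m₁, m₂, m₃. -/
def mProj : Fin 3 → (Matrix (Fin 3) (Fin 3) ℂ → Matrix (Fin 3) (Fin 3) ℂ) :=
  ![fun X => Dm (X 0 1) 0 0, fun X => Dm 0 (X 1 2) 0, fun X => Dm 0 0 (-(X 2 0))]

/-- The invariant metric g = (λ₁,λ₂,λ₃): g(X,Y) = Σ_j λ_j ⟨X_j, Y_j⟩₀ for
X, Y ∈ m, where X_j is the m_j-component; m₁, m₂, m₃ are mutually
orthogonal. -/
def gmet (lam : Fin 3 → ℝ) (X Y : Matrix (Fin 3) (Fin 3) ℂ) : ℝ :=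
  ∑ j : Fin 3, lam j * inner0 (mProj j X) (mProj j Y)

end

noncomputable section

/-- The invariant f-structure with characteristic collection (ζ₁,ζ₂,ζ₃):
f(D(a,b,c)) = D(ζ₁ia, ζ₂ib, ζ₃ic). -/
def fm (z : Fin 3 → ℝ) (X : Matrix (Fin 3) (Fin 3) ℂ) :
    Matrix (Fin 3) (Fin 3) ℂ :=
  Dm ((z 0 : ℂ) * Complex.I * X 0 1) ((z 1 : ℂ) * Complex.I * X 1 2)
    ((z 2 : ℂ) * Complex.I * (-(X 2 0)))

/-- The Nomizu function α(X,Y) = ½[X,Y]_m + U(X,Y) of the Levi-Civita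
connection. -/
def alphaU (U : Matrix (Fin 3) (Fin 3) ℂ → Matrix (Fin 3) (Fin 3) ℂ →
      Matrix (Fin 3) (Fin 3) ℂ)
    (X Y : Matrix (Fin 3) (Fin 3) ℂ) : Matrix (Fin 3) (Fin 3) ℂ :=
  (1 / 2 : ℝ) • projm ⁅X, Y⁆ + U X Y

/-- The covariant derivative (∇_X f)(Y) = α(X, fY) − f(α(X,Y)). -/
def nablaU (U : Matrix (Fin 3) (Fin 3) ℂ → Matrix (Fin 3) (Fin 3) ℂ →
      Matrix (Fin 3) (Fin 3) ℂ)
    (z : Fin 3 → ℝ) (X Y : Matrix (Fin 3) (Fin 3) ℂ) :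
    Matrix (Fin 3) (Fin 3) ℂ :=
  alphaU U X (fm z Y) - fm z (alphaU U X Y)

/-- The composition tensor T(X,Y) = ¼ f((∇_{fX} f)(fY) − (∇_{f²X} f)(f²Y)). -/
def TU (U : Matrix (Fin 3) (Fin 3) ℂ → Matrix (Fin 3) (Fin 3) ℂ →
      Matrix (Fin 3) (Fin 3) ℂ)
    (z : Fin 3 → ℝ) (X Y : Matrix (Fin 3) (Fin 3) ℂ) :
    Matrix (Fin 3) (Fin 3) ℂ :=
  (1 / 4 : ℝ) • fm z (nablaU U z (fm z X) (fm z Y) -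
    nablaU U z (fm z (fm z X)) (fm z (fm z Y)))

end

lemma Dm_mem_mSet (a b c : ℂ) : Dm a b c ∈ mSet := ⟨a, b, c, rfl⟩

lemma Dm_add (a b c p q r : ℂ) : Dm a b c + Dm p q r = Dm (a + p) (b + q) (c + r) := by
  ext i j; fin_cases i <;> fin_cases j <;> simp [Dm] <;> ring

lemma Dm_sub (a b c p q r : ℂ) : Dm a b c - Dm p q r = Dm (a - p) (b - q) (c - r) := by
  ext i j; fin_cases i <;> fin_cases j <;> simp [Dm] <;> ring

lemma real_smul_Dm (t : ℝ) (a b c : ℂ) : t • Dm a b c = Dm (t * a) (t * b) (t * c) := by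
  ext i j; fin_cases i <;> fin_cases j <;> simp [Dm, Complex.real_smul]

lemma Dm_eq_zero_iff {a b c : ℂ} : Dm a b c = 0 ↔ a = 0 ∧ b = 0 ∧ c = 0 := by
  refine ⟨fun h => ⟨?_, ?_, ?_⟩, ?_⟩
  · simpa [Dm] using congrFun (congrFun h 0) 1
  · simpa [Dm] using congrFun (congrFun h 1) 2
  · simpa [Dm] using congrFun (congrFun h 2) 0
  · rintro ⟨rfl, rfl, rfl⟩
    ext i j; fin_cases i <;> fin_cases j <;> simp [Dm]

lemma projm_lie_Dm (a b c p q r : ℂ) :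
    projm ⁅Dm a b c, Dm p q r⁆ =
      Dm (conj (b * r - c * q)) (conj (p * c - a * r)) (conj (a * q - b * p)) := by
  ext i j
  fin_cases i <;> fin_cases j <;>
    simp [projm, Dm, Ring.lie_def, Matrix.diagonal] <;>
    ring

lemma fm_Dm (z : Fin 3 → ℝ) (a b c : ℂ) :
    fm z (Dm a b c) = Dm (z 0 * Complex.I * a) (z 1 * Complex.I * b) (z 2 * Complex.I * c) := by
  simp [fm, Dm]

lemma gmet_Dm (lam : Fin 3 → ℝ) (a b c p q r : ℂ) :
    gmet lam (Dm a b c) (Dm p q r) =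
      lam 0 * (a * conj p).re + lam 1 * (b * conj q).re + lam 2 * (c * conj r).re := by
  simp only [gmet, Fin.sum_univ_three, mProj, inner0]
  simp [Dm, Matrix.trace, Fin.sum_univ_three, Complex.mul_re]
  ring

lemma gmet_Dm_self (lam : Fin 3 → ℝ) (a b c : ℂ) :
    gmet lam (Dm a b c) (Dm a b c) =
      lam 0 * Complex.normSq a + lam 1 * Complex.normSq b + lam 2 * Complex.normSq c := by
  simp only [gmet_Dm, Complex.mul_conj, Complex.ofReal_re]

lemma gmet_sub_Dm (lam : Fin 3 → ℝ) (a b c p q r u v w : ℂ) :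
    gmet lam (Dm a b c) (Dm u v w) - gmet lam (Dm p q r) (Dm u v w) =
      gmet lam (Dm (a - p) (b - q) (c - r)) (Dm u v w) := by
  simp only [gmet_Dm, sub_mul, Complex.sub_re]
  ring

lemma Dm_eq_of_gmet_eq {lam : Fin 3 → ℝ} (hlam : ∀ j, 0 < lam j) {a b c p q r : ℂ}
    (h : ∀ u v w : ℂ, gmet lam (Dm a b c) (Dm u v w) = gmet lam (Dm p q r) (Dm u v w)) :
    Dm a b c = Dm p q r := by
  have hzero := sub_eq_zero.mpr (h (a - p) (b - q) (c - r))
  rw [gmet_sub_Dm, gmet_Dm_self] at hzero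
  have h0 := mul_nonneg (hlam 0).le (Complex.normSq_nonneg (a - p))
  have h1 := mul_nonneg (hlam 1).le (Complex.normSq_nonneg (b - q))
  have h2 := mul_nonneg (hlam 2).le (Complex.normSq_nonneg (c - r))
  have e0 : lam 0 * Complex.normSq (a - p) = 0 := by linarith
  have e1 : lam 1 * Complex.normSq (b - q) = 0 := by linarith
  have e2 : lam 2 * Complex.normSq (c - r) = 0 := by linarith
  simp only [mul_eq_zero, (hlam _).ne', Complex.normSq_eq_zero, sub_eq_zero, false_or] at e0 e1 e2
  rw [e0, e1, e2]

noncomputable def lcCoeff (lam : Fin 3 → ℝ) (i j k : Fin 3) : ℝ :=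
  (lam k - lam j) / (2 * lam i)

lemma lcCoeff_eq_zero_iff {lam : Fin 3 → ℝ} {i : Fin 3} (hi : lam i ≠ 0) (j k : Fin 3) :
    lcCoeff lam i j k = 0 ↔ lam j = lam k := by
  rw [lcCoeff, div_eq_zero_iff, sub_eq_zero]
  simp [hi, eq_comm]

noncomputable def UDm (lam : Fin 3 → ℝ) (a b c p q r : ℂ) : Matrix (Fin 3) (Fin 3) ℂ :=
  Dm (lcCoeff lam 0 1 2 * conj (b * r + c * q)) (lcCoeff lam 1 2 0 * conj (c * p + a * r))
    (lcCoeff lam 2 0 1 * conj (a * q + b * p))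

lemma two_mul_gmet_UDm {lam : Fin 3 → ℝ} (hlam : ∀ j, 0 < lam j) (a b c p q r u v w : ℂ) :
    2 * gmet lam (UDm lam a b c p q r) (Dm u v w) =
      gmet lam (Dm a b c) (projm ⁅Dm u v w, Dm p q r⁆) +
        gmet lam (projm ⁅Dm u v w, Dm a b c⁆) (Dm p q r) := by
  have h0 := (hlam 0).ne'
  have h1 := (hlam 1).ne'
  have h2 := (hlam 2).ne'
  simp only [UDm, lcCoeff, projm_lie_Dm, gmet_Dm, Complex.mul_re, Complex.mul_im,
    Complex.conj_re, Complex.conj_im, Complex.add_re, Complex.add_im, Complex.sub_re,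
    Complex.sub_im, Complex.ofReal_re, Complex.ofReal_im]
  field_simp
  ring

lemma U_Dm {lam : Fin 3 → ℝ} (hlam : ∀ j, 0 < lam j)
    {U : Matrix (Fin 3) (Fin 3) ℂ → Matrix (Fin 3) (Fin 3) ℂ → Matrix (Fin 3) (Fin 3) ℂ}
    (hUmem : ∀ X ∈ mSet, ∀ Y ∈ mSet, U X Y ∈ mSet)
    (hUdef : ∀ X ∈ mSet, ∀ Y ∈ mSet, ∀ Z ∈ mSet,
      2 * gmet lam (U X Y) Z = gmet lam X (projm ⁅Z, Y⁆) + gmet lam (projm ⁅Z, X⁆) Y)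
    (a b c p q r : ℂ) :
    U (Dm a b c) (Dm p q r) = UDm lam a b c p q r := by
  obtain ⟨u₁, u₂, u₃, hu⟩ := hUmem _ (Dm_mem_mSet a b c) _ (Dm_mem_mSet p q r)
  rw [hu, UDm]
  refine Dm_eq_of_gmet_eq hlam fun u v w => ?_
  have hU := hUdef _ (Dm_mem_mSet a b c) _ (Dm_mem_mSet p q r) _ (Dm_mem_mSet u v w)
  have hUDm := two_mul_gmet_UDm hlam a b c p q r u v w
  rw [hu] at hU
  rw [UDm] at hUDm
  linarith

section Formulas

variable {lam : Fin 3 → ℝ}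
  {U : Matrix (Fin 3) (Fin 3) ℂ → Matrix (Fin 3) (Fin 3) ℂ → Matrix (Fin 3) (Fin 3) ℂ}
  (hU : ∀ a b c p q r, U (Dm a b c) (Dm p q r) = UDm lam a b c p q r)
include hU

lemma alphaU_Dm (a b c p q r : ℂ) :
    alphaU U (Dm a b c) (Dm p q r) =
      Dm ((1 / 2 + lcCoeff lam 0 1 2 : ℝ) * (conj b * conj r) +
            (lcCoeff lam 0 1 2 - 1 / 2 : ℝ) * (conj c * conj q))
        ((1 / 2 + lcCoeff lam 1 2 0 : ℝ) * (conj c * conj p) +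
            (lcCoeff lam 1 2 0 - 1 / 2 : ℝ) * (conj a * conj r))
        ((1 / 2 + lcCoeff lam 2 0 1 : ℝ) * (conj a * conj q) +
            (lcCoeff lam 2 0 1 - 1 / 2 : ℝ) * (conj b * conj p)) := by
  rw [alphaU, hU, projm_lie_Dm, UDm, real_smul_Dm, Dm_add]
  congr 1 <;>
  · simp only [map_mul, map_add, map_sub]
    push_cast
    ring

lemma nablaU_Dm (z : Fin 3 → ℝ) (a b c p q r : ℂ) :
    nablaU U z (Dm a b c) (Dm p q r) =
      Dm (-Complex.I * (((1 / 2 + lcCoeff lam 0 1 2) * (z 2 + z 0) : ℝ) * (conj b * conj r) +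
            ((lcCoeff lam 0 1 2 - 1 / 2) * (z 1 + z 0) : ℝ) * (conj c * conj q)))
        (-Complex.I * (((1 / 2 + lcCoeff lam 1 2 0) * (z 0 + z 1) : ℝ) * (conj c * conj p) +
            ((lcCoeff lam 1 2 0 - 1 / 2) * (z 2 + z 1) : ℝ) * (conj a * conj r)))
        (-Complex.I * (((1 / 2 + lcCoeff lam 2 0 1) * (z 1 + z 2) : ℝ) * (conj a * conj q) +
            ((lcCoeff lam 2 0 1 - 1 / 2) * (z 0 + z 2) : ℝ) * (conj b * conj p))) := by
  rw [nablaU, fm_Dm, alphaU_Dm hU, alphaU_Dm hU, fm_Dm, Dm_sub]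
  congr 1 <;>
  · simp only [map_mul, Complex.conj_I, Complex.conj_ofReal]
    push_cast
    ring

lemma TU_Dm (z : Fin 3 → ℝ) (a b c p q r : ℂ) :
    TU U z (Dm a b c) (Dm p q r) =
      Dm (-(1 / 4 : ℂ) *
          ((z 0 * z 1 * z 2 * (1 + z 1 * z 2) * (z 2 + z 0) * (1 / 2 + lcCoeff lam 0 1 2) : ℝ) *
              (conj b * conj r) +
            (z 0 * z 1 * z 2 * (1 + z 1 * z 2) * (z 1 + z 0) * (lcCoeff lam 0 1 2 - 1 / 2) : ℝ) *
              (conj c * conj q)))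
        (-(1 / 4 : ℂ) *
          ((z 1 * z 2 * z 0 * (1 + z 2 * z 0) * (z 0 + z 1) * (1 / 2 + lcCoeff lam 1 2 0) : ℝ) *
              (conj c * conj p) +
            (z 1 * z 2 * z 0 * (1 + z 2 * z 0) * (z 2 + z 1) * (lcCoeff lam 1 2 0 - 1 / 2) : ℝ) *
              (conj a * conj r)))
        (-(1 / 4 : ℂ) *
          ((z 2 * z 0 * z 1 * (1 + z 0 * z 1) * (z 1 + z 2) * (1 / 2 + lcCoeff lam 2 0 1) : ℝ) *
              (conj a * conj q) +
            (z 2 * z 0 * z 1 * (1 + z 0 * z 1) * (z 0 + z 2) * (lcCoeff lam 2 0 1 - 1 / 2) : ℝ) *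
              (conj b * conj p))) := by
  have hI6 : Complex.I ^ 6 = -1 := by
    rw [show 6 = 4 + 2 by rfl, pow_add, Complex.I_pow_four, Complex.I_sq, one_mul]
  simp only [TU, fm_Dm, nablaU_Dm hU, Dm_sub, real_smul_Dm]
  congr 1 <;>
  · simp only [map_mul, Complex.conj_I, Complex.conj_ofReal]
    push_cast
    ring_nf
    simp only [Complex.I_pow_four, hI6]
    ring

lemma TU_Dm_eq_zero {z : Fin 3 → ℝ} (hz : ∀ j, z j = -1 ∨ z j = 0 ∨ z j = 1)
    (hnconst : ¬(z 0 = z 1 ∧ z 1 = z 2 ∧ z 0 ≠ 0)) (a b c p q r : ℂ) :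
    TU U z (Dm a b c) (Dm p q r) = 0 := by
  have hcoeff : ∀ {x y w : ℝ}, (x = -1 ∨ x = 0 ∨ x = 1) → (y = -1 ∨ y = 0 ∨ y = 1) →
      (w = -1 ∨ w = 0 ∨ w = 1) → ¬(x = y ∧ y = w ∧ x ≠ 0) →
      x * y * w * (1 + y * w) * (w + x) = 0 ∧ x * y * w * (1 + y * w) * (y + x) = 0 := by
    rintro x y w (rfl | rfl | rfl) (rfl | rfl | rfl) (rfl | rfl | rfl) h <;> norm_num at *
  obtain ⟨h₀, h₀'⟩ := hcoeff (hz 0) (hz 1) (hz 2) hnconst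
  obtain ⟨h₁, h₁'⟩ := hcoeff (hz 1) (hz 2) (hz 0) (by grind)
  obtain ⟨h₂, h₂'⟩ := hcoeff (hz 2) (hz 0) (hz 1) (by grind)
  rw [TU_Dm hU, h₀, h₀', h₁, h₁', h₂, h₂']
  simp [Dm_eq_zero_iff]

lemma lam_eq_of_TU_Dm_one_eq_zero (hlam : ∀ j, 0 < lam j) {z : Fin 3 → ℝ} (hz01 : z 0 = z 1)
    (hz12 : z 1 = z 2) (hz0 : z 0 ≠ 0) (hT : TU U z (Dm 1 1 1) (Dm 1 1 1) = 0) :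
    lam 0 = lam 1 ∧ lam 1 = lam 2 := by
  rw [TU_Dm hU, Dm_eq_zero_iff, ← hz12, ← hz01] at hT
  obtain ⟨e₀, e₁, -⟩ := hT
  simp only [map_one, mul_one, ← Complex.ofReal_add, mul_eq_zero, Complex.ofReal_eq_zero]
    at e₀ e₁
  norm_num at e₀ e₁
  have hne : z 0 ^ 4 * (1 + z 0 ^ 2) ≠ 0 := by positivity
  have k₀ : z 0 ^ 4 * (1 + z 0 ^ 2) * lcCoeff lam 0 1 2 = 0 := by linear_combination e₀ / 4
  have k₁ : z 0 ^ 4 * (1 + z 0 ^ 2) * lcCoeff lam 1 2 0 = 0 := by linear_combination e₁ / 4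
  rw [mul_eq_zero, or_iff_right hne] at k₀ k₁
  rw [lcCoeff_eq_zero_iff (hlam 0).ne'] at k₀
  rw [lcCoeff_eq_zero_iff (hlam 1).ne'] at k₁
  exact ⟨k₁.symm.trans k₀.symm, k₀⟩

lemma nablaU_fm_self_eq_zero {z : Fin 3 → ℝ} (hz01 : z 0 = z 1) (hz12 : z 1 = z 2)
    (hlam01 : lam 0 = lam 1) (hlam12 : lam 1 = lam 2) {X : Matrix (Fin 3) (Fin 3) ℂ}
    (hX : X ∈ mSet) : nablaU U z (fm z X) (fm z X) = 0 := by
  obtain ⟨a, b, c, rfl⟩ := hX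
  rw [fm_Dm, nablaU_Dm hU, Dm_eq_zero_iff, ← hz12, ← hz01]
  refine ⟨?_, ?_, ?_⟩ <;>
  · simp only [lcCoeff, ← hlam12, ← hlam01, sub_self, zero_div]
    push_cast
    ring

end Formulas

theorem stmt_14_general (z : Fin 3 → ℝ) (hz : ∀ j, z j = -1 ∨ z j = 0 ∨ z j = 1)
    (lam : Fin 3 → ℝ) (hlam : ∀ j, 0 < lam j)
    (U : Matrix (Fin 3) (Fin 3) ℂ → Matrix (Fin 3) (Fin 3) ℂ →
      Matrix (Fin 3) (Fin 3) ℂ)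
    (hUmem : ∀ X ∈ mSet, ∀ Y ∈ mSet, U X Y ∈ mSet)
    (hUdef : ∀ X ∈ mSet, ∀ Y ∈ mSet, ∀ Z ∈ mSet,
      2 * gmet lam (U X Y) Z =
        gmet lam X (projm ⁅Z, Y⁆) + gmet lam (projm ⁅Z, X⁆) Y)
    (hG1 : ∀ X ∈ mSet, TU U z X X = 0) :
    (∀ X ∈ mSet, ∀ Y ∈ mSet, TU U z X Y = 0) ∨
      (∀ X ∈ mSet, nablaU U z (fm z X) (fm z X) = 0) := by
  have hU := U_Dm hlam hUmem hUdef
  by_cases hconst : z 0 = z 1 ∧ z 1 = z 2 ∧ z 0 ≠ 0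
  · obtain ⟨hz01, hz12, hz0⟩ := hconst
    obtain ⟨hlam01, hlam12⟩ :=
      lam_eq_of_TU_Dm_one_eq_zero hU hlam hz01 hz12 hz0 (hG1 _ (Dm_mem_mSet 1 1 1))
    exact Or.inr fun X hX => nablaU_fm_self_eq_zero hU hz01 hz12 hlam01 hlam12 hX
  · left
    rintro _ ⟨a, b, c, rfl⟩ _ ⟨p, q, r, rfl⟩
    exact TU_Dm_eq_zero hU hz hconst a b c p q r

/-- The flag manifold SU(3)/T_max admits no invariant strictly
G₁f-structures: if T(X,X) = 0 for all X ∈ m (f is a G₁f-structure), then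
either T ≡ 0 on m (f is a Hermitian f-structure) or (∇_{fX} f)(fX) = 0 for
all X ∈ m (f is a nearly Kähler f-structure). -/
theorem stmt_14 (z : Fin 3 → ℝ) (hz : ∀ j, z j = -1 ∨ z j = 0 ∨ z j = 1)
    (hz0 : ¬(z 0 = 0 ∧ z 1 = 0 ∧ z 2 = 0))
    (lam : Fin 3 → ℝ) (hlam : ∀ j, 0 < lam j)
    (U : Matrix (Fin 3) (Fin 3) ℂ → Matrix (Fin 3) (Fin 3) ℂ →
      Matrix (Fin 3) (Fin 3) ℂ)
    (hUmem : ∀ X ∈ mSet, ∀ Y ∈ mSet, U X Y ∈ mSet)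
    (hUsymm : ∀ X ∈ mSet, ∀ Y ∈ mSet, U X Y = U Y X)
    (hUdef : ∀ X ∈ mSet, ∀ Y ∈ mSet, ∀ Z ∈ mSet,
      2 * gmet lam (U X Y) Z =
        gmet lam X (projm ⁅Z, Y⁆) + gmet lam (projm ⁅Z, X⁆) Y)
    (hG1 : ∀ X ∈ mSet, TU U z X X = 0) :
    (∀ X ∈ mSet, ∀ Y ∈ mSet, TU U z X Y = 0) ∨
      (∀ X ∈ mSet, nablaU U z (fm z X) (fm z X) = 0) :=
  stmt_14_general z hz lam hlam U hUmem hUdef hG1
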